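/- arXiv:math/0411226 — 4 statements merged into one kernel-verified Lean document; each statement's English description precedes it below -/
import Mathlib

section
/- If A and B are two distinct subfamilies of a partition Σ (i.e., A, B ⊆ Σ with A ≠ B), then ℘*(A) and ℘*(B) are disjoint. -/
/-- A partition: a family of pairwise disjoint nonempty sets. -/
def IsPartitionFam {α : Type*} (C : Set (Set α)) : Prop :=
  (∀ b ∈ C, b.Nonempty) ∧ (∀ b ∈ C, ∀ c ∈ C, b ≠ c → b ∩ c = ∅)

/-- `℘*(X) = { Y : Y ⊆ ⋃X ∧ ∀ z ∈ X, z ∩ Y ≠ ∅ }`. -/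
def powast {α : Type*} (X : Set (Set α)) : Set (Set α) :=
  {Y | Y ⊆ ⋃₀ X ∧ ∀ z ∈ X, (z ∩ Y).Nonempty}

lemma powast_sub {α : Type*} {Sg A B : Set (Set α)} {Y : Set α}
    (hSg : IsPartitionFam Sg) (hA : A ⊆ Sg) (hB : B ⊆ Sg)
    (hYA : Y ∈ powast A) (hYB : Y ∈ powast B) : A ⊆ B := by
  intro a ha
  obtain ⟨x, hxa, hxY⟩ := hYA.2 a ha
  obtain ⟨b, hb, hxb⟩ := hYB.1 hxY
  have : a = b := by
    by_contra hne
    have := hSg.2 a (hA ha) b (hB hb) hne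
    exact absurd this (by simp [Set.eq_empty_iff_forall_notMem]; exact ⟨x, hxa, hxb⟩)
  exact this ▸ hb

/-- Distinct subfamilies of a partition have disjoint `℘*`. -/
theorem powast_disjoint_of_ne {α : Type*} (Sg A B : Set (Set α))
    (hSg : IsPartitionFam Sg) (hA : A ⊆ Sg) (hB : B ⊆ Sg) (hAB : A ≠ B) :
    powast A ∩ powast B = ∅ := by
  rw [Set.eq_empty_iff_forall_notMem]
  rintro Y ⟨hYA, hYB⟩
  exact hAB (le_antisymm (powast_sub hSg hA hB hYA hYB) (powast_sub hSg hB hA hYB hYA))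
end

section
/- Suppose Σ and Σ̂ are partitions and β : Σ → Σ̂ is a bijection such that for each σ ∈ Σ, |β(σ)| = |σ| (cardinality-preserving on each block), and such that for all X ⊆ Σ, σ ∈ Σ: ⋃β[X] ∈ β(σ) iff ⋃X ∈ σ. If X ⊆ Σ, Y₁,…,Y_L ⊆ Σ are distinct subfamilies with ⋃X = {⋃Y₁, …, ⋃Y_L}, and the map X' ↦ ⋃β[X'] is injective on subfamilies of Σ, then ⋃β[X] = {⋃β[Y₁], …, ⋃β[Y_L]}. -/
/-- The image of a ZF-set under an arbitrary function (classically definable). -/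
noncomputable def zImage (f : ZFSet → ZFSet) (X : ZFSet) : ZFSet :=
  @ZFSet.image f (Classical.allZFSetDefinable fun s => f (s 0)) X

/-- `℘*(X) = { Y : Y ⊆ ⋃X ∧ ∀ z ∈ X, z ∩ Y ≠ ∅ }` for ZF-sets. -/
def zPowast (X : ZFSet) : ZFSet :=
  ZFSet.sep (fun Y => ∀ z ∈ X, z ∩ Y ≠ ∅) (ZFSet.powerset (ZFSet.sUnion X))

/-- A partition: a ZF-family of pairwise disjoint nonempty sets. -/
def ZFPartition (S : ZFSet) : Prop :=
  (∀ σ ∈ S, σ ≠ (∅ : ZFSet)) ∧ ∀ σ ∈ S, ∀ τ ∈ S, σ ≠ τ → σ ∩ τ = (∅ : ZFSet)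

/-- A ZF-set is transitive if each of its elements is a subset of it. -/
def ZFTransitive (S : ZFSet) : Prop := ∀ x ∈ S, x ⊆ S

/-!
Fix a block `σ ∈ X`. Every element of `σ` is some `⋃Yᵢ`, and by the simulation property
`⋃Yᵢ ∈ σ ↔ ⋃β[Yᵢ] ∈ β σ`, so `i ↦ ⋃β[Yᵢ]` maps the finite index set `{i | ⋃Yᵢ ∈ σ}`
injectively into `β σ` and onto a set of size at least `|σ| = |β σ|`. Hence the block `β σ`
consists exactly of the sets `⋃β[Yᵢ]` with `⋃Yᵢ ∈ σ`, and taking the union over `σ ∈ X` gives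
the claim.
-/

universe u

open Cardinal Set in
theorem Set.subset_range_of_preimage_eq_of_mk_eq {ι : Type*} {α β : Type u} [Finite ι]
    {f : ι → α} {g : ι → β} {s : Set α} {t : Set β} (hs : s ⊆ range f) (hg : g.Injective)
    (hfg : f ⁻¹' s = g ⁻¹' t) (hst : #t = #s) : t ⊆ range g := by
  obtain ⟨e⟩ := Cardinal.eq.1 hst
  have hsf : s.Finite := (finite_range f).subset hs
  have htf : t.Finite := @Finite.of_equiv _ _ hsf e.symm
  have hle : t.ncard ≤ (g '' (g ⁻¹' t)).ncard :=
    calc t.ncard = s.ncard := ncard_congr' e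
      _ = (f '' (f ⁻¹' s)).ncard := by rw [image_preimage_eq_of_subset hs]
      _ ≤ (f ⁻¹' s).ncard := ncard_image_le
      _ = (g '' (g ⁻¹' t)).ncard := by rw [hfg, ncard_image_of_injective _ hg]
  rw [← eq_of_subset_of_ncard_le (image_preimage_subset g t) hle htf]
  exact image_subset_range g _

theorem mem_sUnion_zImage {β : ZFSet → ZFSet} {X t : ZFSet} :
    t ∈ ZFSet.sUnion (zImage β X) ↔ ∃ σ ∈ X, t ∈ β σ := by
  simp [zImage]

theorem singleton_literal_preserved_general (Sg : ZFSet) (β : ZFSet → ZFSet)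
    (hcard : ∀ σ ∈ Sg, Cardinal.mk (β σ).toSet = Cardinal.mk σ.toSet)
    (hsim : ∀ X : ZFSet, X ⊆ Sg → ∀ σ ∈ Sg,
      (ZFSet.sUnion (zImage β X) ∈ β σ ↔ ZFSet.sUnion X ∈ σ))
    (hinj : ∀ X₁ X₂ : ZFSet, X₁ ⊆ Sg → X₂ ⊆ Sg →
      ZFSet.sUnion (zImage β X₁) = ZFSet.sUnion (zImage β X₂) → X₁ = X₂)
    (L : ℕ) (X : ZFSet) (hX : X ⊆ Sg)
    (Y : Fin L → ZFSet) (hY : ∀ i, Y i ⊆ Sg) (hYinj : Function.Injective Y)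
    (hXY : ∀ t : ZFSet, t ∈ ZFSet.sUnion X ↔ ∃ i, t = ZFSet.sUnion (Y i)) :
    ∀ t : ZFSet, t ∈ ZFSet.sUnion (zImage β X) ↔
      ∃ i, t = ZFSet.sUnion (zImage β (Y i)) := by
  intro t
  rw [mem_sUnion_zImage]
  constructor
  · rintro ⟨σ, hσX, ht⟩
    have hσ : σ.toSet ⊆ Set.range fun i => ZFSet.sUnion (Y i) := fun s hs => by
      obtain ⟨i, rfl⟩ := (hXY s).1 (ZFSet.mem_sUnion.2 ⟨σ, hσX, hs⟩)
      exact ⟨i, rfl⟩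
    have hg : Function.Injective fun i => ZFSet.sUnion (zImage β (Y i)) :=
      fun i j hij => hYinj (hinj _ _ (hY i) (hY j) hij)
    obtain ⟨i, rfl⟩ := Set.subset_range_of_preimage_eq_of_mk_eq hσ hg
      (Set.ext fun i => (hsim _ (hY i) σ (hX hσX)).symm) (hcard σ (hX hσX)) ht
    exact ⟨i, rfl⟩
  · rintro ⟨i, rfl⟩
    obtain ⟨σ, hσX, hσ⟩ := ZFSet.mem_sUnion.1 ((hXY _).2 ⟨i, rfl⟩)
    exact ⟨σ, hσX, (hsim _ (hY i) σ (hX hσX)).2 hσ⟩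

/-- If `β` is a cardinality-preserving ∈-simulation between the partitions `Sg` and
`Sgh`, `X ⊆ Sg`, `Y₁,…,Y_L ⊆ Sg` are distinct subfamilies with `⋃X = {⋃Y₁,…,⋃Y_L}`,
and `X' ↦ ⋃β[X']` is injective on subfamilies of `Sg`, then
`⋃β[X] = {⋃β[Y₁],…,⋃β[Y_L]}`. -/
theorem singleton_literal_preserved (Sg Sgh : ZFSet) (β : ZFSet → ZFSet)
    (hSg : ZFPartition Sg) (hSgh : ZFPartition Sgh)
    (hβ : Set.BijOn β Sg.toSet Sgh.toSet)
    (hcard : ∀ σ ∈ Sg, Cardinal.mk (β σ).toSet = Cardinal.mk σ.toSet)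
    (hsim : ∀ X : ZFSet, X ⊆ Sg → ∀ σ ∈ Sg,
      (ZFSet.sUnion (zImage β X) ∈ β σ ↔ ZFSet.sUnion X ∈ σ))
    (hinj : ∀ X₁ X₂ : ZFSet, X₁ ⊆ Sg → X₂ ⊆ Sg →
      ZFSet.sUnion (zImage β X₁) = ZFSet.sUnion (zImage β X₂) → X₁ = X₂)
    (L : ℕ) (X : ZFSet) (hX : X ⊆ Sg)
    (Y : Fin L → ZFSet) (hY : ∀ i, Y i ⊆ Sg) (hYinj : Function.Injective Y)
    (hXY : ∀ t : ZFSet, t ∈ ZFSet.sUnion X ↔ ∃ i, t = ZFSet.sUnion (Y i)) :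
    ∀ t : ZFSet, t ∈ ZFSet.sUnion (zImage β X) ↔
      ∃ i, t = ZFSet.sUnion (zImage β (Y i)) :=
  singleton_literal_preserved_general Sg β hcard hsim hinj L X hX Y hY hYinj hXY
end

section
/- (Imitation implies simulation, powerset upper bound.) Let Σ, Σ̂ be transitive partitions (⋃⋃Σ ⊆ ⋃Σ and ⋃⋃Σ̂ ⊆ ⋃Σ̂) and β : Σ → Σ̂ a bijection, and let Q be a family of subfamilies of Σ closed under taking subfamilies (D ⊆ B ∈ Q implies D ∈ Q). Assume: (1) for Γ ⊆ Σ and σ ∈ Σ, β(σ) ∩ ℘*(β[Γ]) ≠ ∅ iff σ ∩ ℘*(Γ) ≠ ∅; (2) ⋃β[Γ] ∈ β(σ) iff ⋃Γ ∈ σ; (3) if Γ ∈ Q then ℘*(β[Γ]) ⊆ ⋃Σ̂. Then for X, Y ⊆ Σ with Y ∈ Q and ⋃X = 𝒫(⋃Y), we have 𝒫(⋃β[Y]) ⊆ ⋃β[X]. -/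
/-- (Imitation implies simulation, powerset upper bound.) Let `Sg`, `Sgh` be transitive
partitions, `β` a bijection between them, and `Q` a family of subfamilies of `Sg`
closed under subfamilies. Under the imitation hypotheses (1)-(3), if `Y ∈ Q` and
`⋃X = 𝒫(⋃Y)` then `𝒫(⋃β[Y]) ⊆ ⋃β[X]`. -/
theorem imitation_implies_simulation_pow_upper (Sg Sgh : ZFSet) (β : ZFSet → ZFSet)
    (hSg : ZFPartition Sg) (hSgh : ZFPartition Sgh)
    (htSg : ZFTransitive (ZFSet.sUnion Sg)) (htSgh : ZFTransitive (ZFSet.sUnion Sgh))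
    (hβ : Set.BijOn β Sg.toSet Sgh.toSet)
    (Q : Set ZFSet) (hQsub : ∀ B ∈ Q, B ⊆ Sg)
    (hQclosed : ∀ B ∈ Q, ∀ D : ZFSet, D ⊆ B → D ∈ Q)
    (him1 : ∀ Γ : ZFSet, Γ ⊆ Sg → ∀ σ ∈ Sg,
      (β σ ∩ zPowast (zImage β Γ) ≠ (∅ : ZFSet) ↔ σ ∩ zPowast Γ ≠ (∅ : ZFSet)))
    (him2 : ∀ Γ : ZFSet, Γ ⊆ Sg → ∀ σ ∈ Sg,
      (ZFSet.sUnion (zImage β Γ) ∈ β σ ↔ ZFSet.sUnion Γ ∈ σ))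
    (him3 : ∀ Γ : ZFSet, Γ ⊆ Sg → Γ ∈ Q →
      zPowast (zImage β Γ) ⊆ ZFSet.sUnion Sgh) :
    ∀ X Y : ZFSet, X ⊆ Sg → Y ⊆ Sg → Y ∈ Q →
      ZFSet.sUnion X = ZFSet.powerset (ZFSet.sUnion Y) →
      ZFSet.powerset (ZFSet.sUnion (zImage β Y)) ⊆ ZFSet.sUnion (zImage β X) := by
  intro X Y hX hY hYQ hpow t ht
  rw [ZFSet.mem_powerset] at ht
  simp only [ZFSet.mem_sUnion]
  by_cases htemp : t = ∅
  · -- t = ∅ : use him2 with Γ = ∅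
    have h0 : (∅ : ZFSet) ∈ ZFSet.sUnion X := by
      rw [hpow, ZFSet.mem_powerset]; intro z hz; exact absurd hz (by simp)
    obtain ⟨σ, hσX, hσ0⟩ := ZFSet.mem_sUnion.mp h0
    have hz1 : zImage β (∅ : ZFSet) = ∅ := by
      ext x; simp [zImage, ZFSet.mem_image]
    have := (him2 ∅ (by intro z hz; exact absurd hz (by simp)) σ (hX hσX)).mpr
      (by simpa using hσ0)
    refine ⟨β σ, ?_, ?_⟩
    · simp only [zImage, ZFSet.mem_image]; exact ⟨σ, hσX, rfl⟩
    · rw [htemp]; simpa [hz1] using this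
  · -- t ≠ ∅
    set Γ : ZFSet := ZFSet.sep (fun σ => β σ ∩ t ≠ ∅) Y with hΓdef
    have hΓY : Γ ⊆ Y := fun z hz => (ZFSet.mem_sep.mp hz).1
    have hΓSg : Γ ⊆ Sg := fun z hz => hY (hΓY hz)
    have hΓQ : Γ ∈ Q := hQclosed Y hYQ Γ hΓY
    have hmemim : ∀ x, x ∈ zImage β Γ ↔ ∃ σ ∈ Γ, β σ = x := by
      intro x; simp [zImage, ZFSet.mem_image]
    -- t ∈ zPowast (zImage β Γ)
    have htp : t ∈ zPowast (zImage β Γ) := by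
      rw [zPowast, ZFSet.mem_sep, ZFSet.mem_powerset]
      constructor
      · intro x hx
        obtain ⟨sh, hsh, hxsh⟩ := ZFSet.mem_sUnion.mp (ht hx)
        obtain ⟨σ, hσY, rfl⟩ := (by simpa [zImage, ZFSet.mem_image] using hsh :
          ∃ σ ∈ Y, β σ = sh)
        have hσΓ : σ ∈ Γ := ZFSet.mem_sep.mpr ⟨hσY, by
          intro h
          have : x ∈ β σ ∩ t := ZFSet.mem_inter.mpr ⟨hxsh, hx⟩
          rw [h] at this; simp at this⟩
        exact ZFSet.mem_sUnion.mpr ⟨β σ, (hmemim _).mpr ⟨σ, hσΓ, rfl⟩, hxsh⟩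
      · intro z hz
        obtain ⟨σ, hσΓ, rfl⟩ := (hmemim z).mp hz
        exact (ZFSet.mem_sep.mp hσΓ).2
    -- him3 : t ∈ ⋃ Sgh
    have htS : t ∈ ZFSet.sUnion Sgh := him3 Γ hΓSg hΓQ htp
    obtain ⟨τ, hτS, htτ⟩ := ZFSet.mem_sUnion.mp htS
    obtain ⟨σ, hσSg, rfl⟩ := hβ.surjOn hτS
    have hσSg' : σ ∈ Sg := hσSg
    -- him1
    have h1 : β σ ∩ zPowast (zImage β Γ) ≠ ∅ := by
      intro h
      have : t ∈ β σ ∩ zPowast (zImage β Γ) := ZFSet.mem_inter.mpr ⟨htτ, htp⟩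
      rw [h] at this; simp at this
    have h2 := (him1 Γ hΓSg σ hσSg').mp h1
    obtain ⟨s, hs⟩ : ∃ s, s ∈ σ ∩ zPowast Γ := by
      by_contra hc; push_neg at hc
      exact h2 (ZFSet.ext fun z => by simp [hc z])
    obtain ⟨hsσ, hsp⟩ := ZFSet.mem_inter.mp hs
    have hsY : s ⊆ ZFSet.sUnion Y := by
      have h1 := ZFSet.mem_powerset.mp (ZFSet.mem_sep.mp
        (by simpa [zPowast] using hsp : s ∈ ZFSet.sep
          (fun Z => ∀ z ∈ Γ, z ∩ Z ≠ ∅) (ZFSet.powerset (ZFSet.sUnion Γ)))).1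
      intro x hx
      obtain ⟨z, hzΓ, hxz⟩ := ZFSet.mem_sUnion.mp (h1 hx)
      exact ZFSet.mem_sUnion.mpr ⟨z, hΓY hzΓ, hxz⟩
    have hsX : s ∈ ZFSet.sUnion X := by rw [hpow, ZFSet.mem_powerset]; exact hsY
    obtain ⟨ρ, hρX, hsρ⟩ := ZFSet.mem_sUnion.mp hsX
    have hσρ : σ = ρ := by
      by_contra hne
      have := hSg.2 σ hσSg' ρ (hX hρX) hne
      have : s ∈ σ ∩ ρ := ZFSet.mem_inter.mpr ⟨hsσ, hsρ⟩
      rw [hSg.2 σ hσSg' ρ (hX hρX) hne] at this; simp at this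
    exact ⟨β σ, by simp only [zImage, ZFSet.mem_image]; exact ⟨ρ, hρX, by rw [hσρ]⟩, htτ⟩
end

section
/- (Imitation implies simulation, powerset lower bound.) Let Σ, Σ̂ be transitive partitions and β : Σ → Σ̂ a bijection satisfying: (1) for Γ ⊆ Σ and σ ∈ Σ, β(σ) ∩ ℘*(β[Γ]) ≠ ∅ iff σ ∩ ℘*(Γ) ≠ ∅. Then for X, Y ⊆ Σ with ⋃X = 𝒫(⋃Y), we have ⋃β[X] ⊆ 𝒫(⋃β[Y]). -/
theorem mem_zImage {f : ZFSet → ZFSet} {x y : ZFSet} :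
    y ∈ zImage f x ↔ ∃ z ∈ x, f z = y :=
  @ZFSet.mem_image f (Classical.allZFSetDefinable fun s => f (s 0)) x y

theorem zfset_ne_empty {x : ZFSet} : x ≠ ∅ ↔ ∃ y, y ∈ x := by
  rw [ne_eq, ZFSet.eq_empty]; push_neg; rfl

/-- (Imitation implies simulation, powerset lower bound.) Let `Sg`, `Sgh` be transitive
partitions and `β` a bijection between them such that
`β(σ) ∩ ℘*(β[Γ]) ≠ ∅ ↔ σ ∩ ℘*(Γ) ≠ ∅` for all `Γ ⊆ Sg`, `σ ∈ Sg`. Then for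
`X, Y ⊆ Sg` with `⋃X = 𝒫(⋃Y)`, we have `⋃β[X] ⊆ 𝒫(⋃β[Y])`. -/
theorem imitation_implies_simulation_pow_lower (Sg Sgh : ZFSet) (β : ZFSet → ZFSet)
    (hSg : ZFPartition Sg) (hSgh : ZFPartition Sgh)
    (htSg : ZFTransitive (ZFSet.sUnion Sg)) (htSgh : ZFTransitive (ZFSet.sUnion Sgh))
    (hβ : Set.BijOn β Sg.toSet Sgh.toSet)
    (him1 : ∀ Γ : ZFSet, Γ ⊆ Sg → ∀ σ ∈ Sg,
      (β σ ∩ zPowast (zImage β Γ) ≠ (∅ : ZFSet) ↔ σ ∩ zPowast Γ ≠ (∅ : ZFSet))) :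
    ∀ X Y : ZFSet, X ⊆ Sg → Y ⊆ Sg →
      ZFSet.sUnion X = ZFSet.powerset (ZFSet.sUnion Y) →
      ZFSet.sUnion (zImage β X) ⊆ ZFSet.powerset (ZFSet.sUnion (zImage β Y)) := by
  intro X Y hX hY hXY t ht
  rw [ZFSet.mem_powerset]
  rw [ZFSet.mem_sUnion] at ht
  obtain ⟨b, hb, htb⟩ := ht
  obtain ⟨σ, hσX, rfl⟩ := mem_zImage.mp hb
  have hσSg : σ ∈ Sg := hX hσX
  -- the set of blocks of Sgh meeting t
  set Γh : ZFSet := ZFSet.sep (fun τ => τ ∩ t ≠ ∅) Sgh with hΓhdef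
  -- its preimage under β
  set Γ : ZFSet := ZFSet.sep (fun τ => β τ ∈ Γh) Sg with hΓdef
  have hΓSg : Γ ⊆ Sg := fun τ hτ => (ZFSet.mem_sep.mp hτ).1
  have himg : zImage β Γ = Γh := by
    apply ZFSet.ext
    intro u
    constructor
    · intro hu
      obtain ⟨τ, hτ, rfl⟩ := mem_zImage.mp hu
      exact (ZFSet.mem_sep.mp hτ).2
    · intro hu
      obtain ⟨τ, hτSg, hτeq⟩ := hβ.2.2 (show u ∈ Sgh.toSet from (ZFSet.mem_sep.mp hu).1)
      exact mem_zImage.mpr ⟨τ, ZFSet.mem_sep.mpr ⟨hτSg, by rwa [hτeq]⟩, hτeq⟩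
  -- t is in ⋃Sgh, hence a subset of it
  have hβσ : β σ ∈ Sgh := hβ.1 hσSg
  have htU : t ⊆ ZFSet.sUnion Sgh := htSgh t (ZFSet.mem_sUnion.mpr ⟨β σ, hβσ, htb⟩)
  -- t ⊆ ⋃Γh
  have htΓh : t ⊆ ZFSet.sUnion Γh := by
    intro u hu
    obtain ⟨τ, hτ, huτ⟩ := ZFSet.mem_sUnion.mp (htU hu)
    refine ZFSet.mem_sUnion.mpr ⟨τ, ZFSet.mem_sep.mpr ⟨hτ, ?_⟩, huτ⟩
    exact zfset_ne_empty.mpr ⟨u, ZFSet.mem_inter.mpr ⟨huτ, hu⟩⟩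
  -- t ∈ zPowast Γh
  have htP : t ∈ zPowast Γh := by
    refine ZFSet.mem_sep.mpr ⟨ZFSet.mem_powerset.mpr htΓh, fun z hz => ?_⟩
    exact (ZFSet.mem_sep.mp hz).2
  -- apply the imitation hypothesis
  have hne : β σ ∩ zPowast (zImage β Γ) ≠ ∅ := by
    rw [himg]
    exact zfset_ne_empty.mpr ⟨t, ZFSet.mem_inter.mpr ⟨htb, htP⟩⟩
  obtain ⟨s, hs⟩ := zfset_ne_empty.mp ((him1 Γ hΓSg σ hσSg).mp hne)
  obtain ⟨hsσ, hsP⟩ := ZFSet.mem_inter.mp hs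
  -- s ⊆ ⋃Y
  have hsY : s ⊆ ZFSet.sUnion Y := by
    have : s ∈ ZFSet.sUnion X := ZFSet.mem_sUnion.mpr ⟨σ, hσX, hsσ⟩
    rw [hXY] at this
    exact ZFSet.mem_powerset.mp this
  -- Γ ⊆ Y
  have hΓY : Γ ⊆ Y := by
    intro τ hτ
    obtain ⟨w, hw⟩ := zfset_ne_empty.mp ((ZFSet.mem_sep.mp hsP).2 τ hτ)
    obtain ⟨hwτ, hws⟩ := ZFSet.mem_inter.mp hw
    obtain ⟨τ', hτ'Y, hwτ'⟩ := ZFSet.mem_sUnion.mp (hsY hws)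
    have : τ = τ' := by
      by_contra hne'
      have := hSg.2 τ (hΓSg hτ) τ' (hY hτ'Y) hne'
      exact ZFSet.notMem_empty w (this ▸ ZFSet.mem_inter.mpr ⟨hwτ, hwτ'⟩)
    rwa [this]
  -- conclude
  intro u hu
  obtain ⟨th, hth, huth⟩ := ZFSet.mem_sUnion.mp (htΓh hu)
  rw [← himg] at hth
  obtain ⟨τ, hτΓ, hτeq⟩ := mem_zImage.mp hth
  exact ZFSet.mem_sUnion.mpr ⟨th, mem_zImage.mpr ⟨τ, hΓY hτΓ, hτeq⟩, huth⟩
end
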